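/- arXiv:0812.5068 — 4 statements merged into one kernel-verified Lean document; each statement's English description precedes it below -/
import Mathlib

section
/- Let n be a positive integer, Q an n×n complex matrix, and F : [0,∞) → ℂⁿ an integrable function. Let U : [0,∞) → ℂⁿ be continuously differentiable with U'(z) = Q·U(z) + F(z) for all z ≥ 0 and U(z) → 0 as z → ∞. Suppose S is a Hermitian n×n complex matrix with ⟨Sv, v⟩ ≥ |v|² for all v ∈ ℂⁿ (S ≥ Id), and the Hermitian part Re(SQ) := (SQ + (SQ)*)/2 satisfies ⟨Re(SQ)v, v⟩ ≥ θ|v|² for all v (Re(SQ) ≥ θ·Id) for some θ > 0. Then sup_{z≥0} |U(z)|² + θ·∫₀^∞ |U(z)|² dz ≤ 8‖S‖² (∫₀^∞ |F(z)| dz)², where ‖S‖ is the operator norm of S. -/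
open MeasureTheory Set

set_option maxHeartbeats 1000000 in
/-- Lemma 3.2, first case (positive symmetrizer, decaying solution): if
`∂_z U = Q U + F` on `[0,∞)` with `U(+∞) = 0`, `S` Hermitian with `S ≥ Id` and
`Re (S Q) ≥ θ Id`, then `sup |U|² + θ ∫ |U|² ≤ 8 ‖S‖² (∫ |F|)²`. -/
theorem symmetrizer_energy_estimate_decaying
    (n : ℕ) (hn : 0 < n)
    (Q S : EuclideanSpace ℂ (Fin n) →L[ℂ] EuclideanSpace ℂ (Fin n))
    (θ : ℝ) (hθ : 0 < θ)
    (F U : ℝ → EuclideanSpace ℂ (Fin n))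
    (hF : IntegrableOn F (Ici 0))
    (hU : ∀ z : ℝ, 0 ≤ z → HasDerivAt U (Q (U z) + F z) z)
    (hUlim : Filter.Tendsto U Filter.atTop (nhds 0))
    (hSsa : IsSelfAdjoint S)
    (hSpos : ∀ v : EuclideanSpace ℂ (Fin n), ‖v‖ ^ 2 ≤ (inner ℂ (S v) v : ℂ).re)
    (hSQ : ∀ v : EuclideanSpace ℂ (Fin n),
      θ * ‖v‖ ^ 2 ≤
        (inner ℂ ((((1 : ℂ) / 2) • ((S ∘L Q) + ContinuousLinearMap.adjoint (S ∘L Q))) v) v : ℂ).re) :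
    IntegrableOn (fun z => ‖U z‖ ^ 2) (Ici 0) ∧
      ∀ z : ℝ, 0 ≤ z →
        ‖U z‖ ^ 2 + θ * ∫ w in Ici (0 : ℝ), ‖U w‖ ^ 2 ≤
          8 * ‖S‖ ^ 2 * (∫ w in Ici (0 : ℝ), ‖F w‖) ^ 2 := by
  classical
  -- re-symmetry for selfadjoint S
  have hresym : ∀ x y : EuclideanSpace ℂ (Fin n), (inner ℂ (S x) y : ℂ).re = (inner ℂ (S y) x : ℂ).re := by
    intro x y
    have h1 : (inner ℂ (S y) x : ℂ) = inner ℂ y (S x) := by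
      conv_lhs => rw [← hSsa.adjoint_eq]
      exact ContinuousLinearMap.adjoint_inner_left S x y
    have h2 : (inner ℂ y (S x) : ℂ) = starRingEnd ℂ (inner ℂ (S x) y) := by
      rw [inner_conj_symm]
    rw [h1, h2, Complex.conj_re]
  -- coercivity of Re (S Q)
  have hSQre : ∀ v : EuclideanSpace ℂ (Fin n), θ * ‖v‖ ^ 2 ≤ (inner ℂ (S (Q v)) v : ℂ).re := by
    intro v
    have h := hSQ v
    have hadj : (inner ℂ ((ContinuousLinearMap.adjoint (S ∘L Q)) v) v : ℂ)
        = inner ℂ v ((S ∘L Q) v) := ContinuousLinearMap.adjoint_inner_left _ v v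
    have hconj : (inner ℂ v ((S ∘L Q) v) : ℂ) = starRingEnd ℂ (inner ℂ ((S ∘L Q) v) v) :=
      (inner_conj_symm _ _).symm
    have hval : (inner ℂ ((((1 : ℂ) / 2) • ((S ∘L Q) + ContinuousLinearMap.adjoint (S ∘L Q))) v) v : ℂ).re
        = (inner ℂ ((S ∘L Q) v) v : ℂ).re := by
      rw [ContinuousLinearMap.smul_apply, inner_smul_left, ContinuousLinearMap.add_apply,
        inner_add_left, hadj, hconj]
      simp [Complex.add_re, Complex.mul_re]
      rw [← inner_conj_symm v (S (Q v)), Complex.conj_re]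
      ring
    rw [hval] at h
    simpa using h
  -- continuity of U on Ici 0
  have hUcont : ContinuousOn U (Ici 0) := fun z hz => ((hU z hz).continuousAt).continuousWithinAt
  -- boundedness of ‖U‖ on Ici 0
  obtain ⟨Z, hZ⟩ : ∃ Z : ℝ, ∀ z ≥ Z, ‖U z‖ ≤ 1 := by
    have h := hUlim.norm
    simp only [norm_zero] at h
    have := h.eventually_le_const (by norm_num : (0:ℝ) < 1)
    exact Filter.eventually_atTop.1 this
  obtain ⟨B, hB⟩ : ∃ B : ℝ, ∀ x ∈ Icc (0:ℝ) (max Z 0), ‖U x‖ ≤ B := by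
    rcases (isCompact_Icc (a := (0:ℝ)) (b := max Z 0)).exists_bound_of_continuousOn
      (hUcont.mono (by intro x hx; exact hx.1)) with ⟨C, hC⟩
    exact ⟨C, hC⟩
  have hbdd : ∀ z : ℝ, 0 ≤ z → ‖U z‖ ≤ max B 1 := by
    intro z hz
    rcases le_or_gt z (max Z 0) with hzZ | hzZ
    · exact le_trans (hB z ⟨hz, hzZ⟩) (le_max_left _ _)
    · exact le_trans (hZ z (le_of_lt (lt_of_le_of_lt (le_max_left Z 0) hzZ))) (le_max_right _ _)
  set M : ℝ := sSup ((fun z => ‖U z‖) '' Ici 0) with hMdef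
  have hMne : ((fun z => ‖U z‖) '' Ici 0).Nonempty := ⟨‖U 0‖, ⟨0, Set.self_mem_Ici, rfl⟩⟩
  have hMbdd : BddAbove ((fun z => ‖U z‖) '' Ici 0) := by
    refine ⟨max B 1, ?_⟩
    rintro x ⟨z, hz, rfl⟩
    exact hbdd z hz
  have hM : ∀ z : ℝ, 0 ≤ z → ‖U z‖ ≤ M := fun z hz =>
    le_csSup hMbdd ⟨z, hz, rfl⟩
  have hM0 : 0 ≤ M := le_trans (norm_nonneg _) (hM 0 le_rfl)
  have hS0 : (0:ℝ) ≤ ‖S‖ := norm_nonneg _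
  set IF : ℝ := ∫ w in Ici (0 : ℝ), ‖F w‖ with hIFdef
  have hIF0 : 0 ≤ IF := setIntegral_nonneg measurableSet_Ici (fun x _ => norm_nonneg _)
  -- energy function
  set g : ℝ → ℝ := fun z => (inner ℂ (S (U z)) (U z) : ℂ).re with hgdef
  have hg' : ∀ z : ℝ, 0 ≤ z →
      HasDerivAt g (2 * (inner ℂ (S (Q (U z) + F z)) (U z) : ℂ).re) z := by
    intro z hz
    have hdU := hU z hz
    have hSU : HasDerivAt (fun t => S (U t)) (S (Q (U z) + F z)) z := by
      have := ((S.restrictScalars ℝ).hasFDerivAt (x := U z)).comp_hasDerivAt z hdU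
      exact this
    have hinner := hSU.inner ℂ hdU
    have := Complex.reCLM.hasFDerivAt.comp_hasDerivAt z hinner
    refine this.congr_deriv ?_
    simp only [Complex.reCLM_apply, Complex.add_re]
    rw [hresym (U z) (Q (U z) + F z)]
    ring
  -- pointwise lower bound for the derivative
  have hglb : ∀ z : ℝ, 0 ≤ z →
      2 * θ * ‖U z‖ ^ 2 - 2 * ‖S‖ * M * ‖F z‖ ≤
        2 * (inner ℂ (S (Q (U z) + F z)) (U z) : ℂ).re := by
    intro z hz
    have hsplit : (inner ℂ (S (Q (U z) + F z)) (U z) : ℂ)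
        = inner ℂ (S (Q (U z))) (U z) + inner ℂ (S (F z)) (U z) := by
      rw [map_add, inner_add_left]
    have h1 := hSQre (U z)
    have h2 : -(‖S‖ * ‖F z‖ * ‖U z‖) ≤ (inner ℂ (S (F z)) (U z) : ℂ).re := by
      have habs : |(inner ℂ (S (F z)) (U z) : ℂ).re| ≤ ‖(inner ℂ (S (F z)) (U z) : ℂ)‖ :=
        Complex.abs_re_le_norm _
      have hni : ‖(inner ℂ (S (F z)) (U z) : ℂ)‖ ≤ ‖S (F z)‖ * ‖U z‖ := norm_inner_le_norm _ _
      have hSF : ‖S (F z)‖ * ‖U z‖ ≤ ‖S‖ * ‖F z‖ * ‖U z‖ :=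
        mul_le_mul_of_nonneg_right (S.le_opNorm _) (norm_nonneg _)
      nlinarith [neg_abs_le ((inner ℂ (S (F z)) (U z) : ℂ)).re]
    have h3 : ‖S‖ * ‖F z‖ * ‖U z‖ ≤ ‖S‖ * M * ‖F z‖ := by
      have : ‖S‖ * ‖F z‖ * ‖U z‖ ≤ ‖S‖ * ‖F z‖ * M :=
        mul_le_mul_of_nonneg_left (hM z hz) (by positivity)
      nlinarith
    rw [hsplit]
    simp only [Complex.add_re]
    nlinarith
  -- continuity of the continuous part of the derivative
  have hCcont : ContinuousOn (fun z => 2 * (inner ℂ (S (Q (U z))) (U z) : ℂ).re) (Ici (0:ℝ)) := by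
    have : ContinuousOn (fun z => (inner ℂ (S (Q (U z))) (U z) : ℂ)) (Ici (0:ℝ)) :=
      ContinuousOn.inner ((S.continuous.comp Q.continuous).comp_continuousOn hUcont) hUcont
    have h2 : ContinuousOn (fun z => (inner ℂ (S (Q (U z))) (U z) : ℂ).re) (Ici (0:ℝ)) :=
      Complex.continuous_re.comp_continuousOn this
    exact continuousOn_const.mul h2
  have hUsq_cont : ContinuousOn (fun z => ‖U z‖ ^ 2) (Ici (0:ℝ)) := hUcont.norm.pow 2
  -- integrability of the F-part of the derivative on Ioc a b (for 0 ≤ a)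
  have hφint : ∀ a b : ℝ, 0 ≤ a →
      IntegrableOn (fun z => 2 * (inner ℂ (S (F z)) (U z) : ℂ).re) (Ioc a b) := by
    intro a b ha
    have hsub : Ioc a b ⊆ Ici (0:ℝ) := fun x hx => le_trans ha (le_of_lt hx.1)
    have hFae : AEStronglyMeasurable F (volume.restrict (Ioc a b)) :=
      (hF.mono_set hsub).1
    have hUae : AEStronglyMeasurable U (volume.restrict (Ioc a b)) :=
      (hUcont.mono hsub).aestronglyMeasurable measurableSet_Ioc
    have hSFae : AEStronglyMeasurable (fun z => S (F z)) (volume.restrict (Ioc a b)) :=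
      S.continuous.comp_aestronglyMeasurable hFae
    have hiae : AEStronglyMeasurable (fun z => (inner ℂ (S (F z)) (U z) : ℂ))
        (volume.restrict (Ioc a b)) := hSFae.inner hUae
    have hmeas : AEStronglyMeasurable (fun z => 2 * (inner ℂ (S (F z)) (U z) : ℂ).re)
        (volume.restrict (Ioc a b)) :=
      (Complex.continuous_re.comp_aestronglyMeasurable hiae).const_mul 2
    refine Integrable.mono' ((((hF.mono_set hsub).norm)).const_mul (2 * ‖S‖ * M)) hmeas ?_
    refine (ae_restrict_iff' measurableSet_Ioc).2 (Filter.Eventually.of_forall ?_)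
    intro z hz
    have hz0 : (0:ℝ) ≤ z := le_trans ha (le_of_lt hz.1)
    have h1 : |(inner ℂ (S (F z)) (U z) : ℂ).re| ≤ ‖(inner ℂ (S (F z)) (U z) : ℂ)‖ :=
      Complex.abs_re_le_norm _
    have h2 : ‖(inner ℂ (S (F z)) (U z) : ℂ)‖ ≤ ‖S (F z)‖ * ‖U z‖ := norm_inner_le_norm _ _
    have h3 : ‖S (F z)‖ * ‖U z‖ ≤ (‖S‖ * ‖F z‖) * M := by
      have := S.le_opNorm (F z)
      nlinarith [hM z hz0, norm_nonneg (S (F z)), norm_nonneg (F z), norm_nonneg (U z)]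
    have : ‖2 * (inner ℂ (S (F z)) (U z) : ℂ).re‖ ≤ 2 * ((‖S‖ * ‖F z‖) * M) := by
      rw [Real.norm_eq_abs, abs_mul, abs_two]
      nlinarith
    calc ‖2 * (inner ℂ (S (F z)) (U z) : ℂ).re‖ ≤ 2 * ((‖S‖ * ‖F z‖) * M) := this
      _ = 2 * ‖S‖ * M * ‖F z‖ := by ring
  -- interval integrability of the derivative
  have hDint : ∀ a b : ℝ, 0 ≤ a → a ≤ b →
      IntervalIntegrable (fun z => 2 * (inner ℂ (S (Q (U z) + F z)) (U z) : ℂ).re) volume a b := by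
    intro a b ha hab
    have hIcc : Icc a b ⊆ Ici (0:ℝ) := fun x hx => le_trans ha hx.1
    have hIoc : Ioc a b ⊆ Ici (0:ℝ) := fun x hx => le_trans ha (le_of_lt hx.1)
    have h1 : IntervalIntegrable (fun z => 2 * (inner ℂ (S (Q (U z))) (U z) : ℂ).re) volume a b :=
      (hCcont.mono (by rwa [uIcc_of_le hab])).intervalIntegrable
    have h2 : IntervalIntegrable (fun z => 2 * (inner ℂ (S (F z)) (U z) : ℂ).re) volume a b := by
      rw [intervalIntegrable_iff_integrableOn_Ioc_of_le hab]
      exact hφint a b ha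
    have := h1.add h2
    refine this.congr (fun z _ => ?_)
    rw [map_add, inner_add_left]
    simp [Complex.add_re]
    ring
  -- interval integrability of the lower bound
  have hFin : ∀ a b : ℝ, 0 ≤ a → a ≤ b →
      IntervalIntegrable (fun z => ‖F z‖) volume a b := by
    intro a b ha hab
    rw [intervalIntegrable_iff_integrableOn_Ioc_of_le hab]
    exact (hF.mono_set (fun x hx => le_trans ha (le_of_lt hx.1))).norm
  have hUsqIoc : ∀ b : ℝ, IntegrableOn (fun z => ‖U z‖ ^ 2) (Ioc 0 b) := by
    intro b
    have : IntegrableOn (fun z => ‖U z‖ ^ 2) (Icc 0 b) :=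
      (hUsq_cont.mono (fun x hx => hx.1)).integrableOn_Icc
    exact this.mono_set Ioc_subset_Icc_self
  have hUsqInt : ∀ a b : ℝ, 0 ≤ a → a ≤ b →
      IntervalIntegrable (fun z => ‖U z‖ ^ 2) volume a b := by
    intro a b ha hab
    exact ((hUsq_cont.mono (fun x hx => le_trans ha ((uIcc_of_le hab ▸ hx).1))).intervalIntegrable)
  -- FTC + lower bound
  have hFleIF : ∀ a b : ℝ, 0 ≤ a → a ≤ b → (∫ z in a..b, ‖F z‖) ≤ IF := by
    intro a b ha hab
    rw [intervalIntegral.integral_of_le hab, hIFdef]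
    refine setIntegral_mono_set hF.norm ?_ ?_
    · exact Filter.Eventually.of_forall (fun x => norm_nonneg _)
    · exact HasSubset.Subset.eventuallyLE (fun x hx => le_trans ha (le_of_lt hx.1))
  have hmain : ∀ a b : ℝ, 0 ≤ a → a ≤ b →
      2 * θ * (∫ z in a..b, ‖U z‖ ^ 2) - 2 * ‖S‖ * M * IF ≤ g b - g a := by
    intro a b ha hab
    have hftc : g b - g a = ∫ z in a..b, 2 * (inner ℂ (S (Q (U z) + F z)) (U z) : ℂ).re := by
      refine (intervalIntegral.integral_eq_sub_of_hasDerivAt ?_ (hDint a b ha hab)).symm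
      intro z hz
      rw [uIcc_of_le hab] at hz
      exact hg' z (le_trans ha hz.1)
    have hmono : (∫ z in a..b, (2 * θ * ‖U z‖ ^ 2 - 2 * ‖S‖ * M * ‖F z‖)) ≤
        ∫ z in a..b, 2 * (inner ℂ (S (Q (U z) + F z)) (U z) : ℂ).re := by
      refine intervalIntegral.integral_mono_on hab ?_ (hDint a b ha hab) ?_
      · exact ((hUsqInt a b ha hab).const_mul (2 * θ)).sub ((hFin a b ha hab).const_mul (2 * ‖S‖ * M))
      · intro x hx
        exact hglb x (le_trans ha hx.1)
    have hsplit : (∫ z in a..b, (2 * θ * ‖U z‖ ^ 2 - 2 * ‖S‖ * M * ‖F z‖)) =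
        2 * θ * (∫ z in a..b, ‖U z‖ ^ 2) - 2 * ‖S‖ * M * (∫ z in a..b, ‖F z‖) := by
      rw [intervalIntegral.integral_sub ((hUsqInt a b ha hab).const_mul (2 * θ))
        ((hFin a b ha hab).const_mul (2 * ‖S‖ * M)),
        intervalIntegral.integral_const_mul, intervalIntegral.integral_const_mul]
    have hIF' : 2 * ‖S‖ * M * (∫ z in a..b, ‖F z‖) ≤ 2 * ‖S‖ * M * IF :=
      mul_le_mul_of_nonneg_left (hFleIF a b ha hab) (by positivity)
    rw [hftc]
    linarith [hmono, hsplit.symm.le, hsplit.le]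
  -- bounds on g
  have hgunit : ∀ a : ℝ, 0 ≤ a → ‖U a‖ ^ 2 ≤ g a := fun a _ => hSpos (U a)
  have hg0 : ∀ a : ℝ, 0 ≤ a → 0 ≤ g a := fun a ha =>
    le_trans (by positivity) (hgunit a ha)
  have hgM : ∀ b : ℝ, 0 ≤ b → g b ≤ ‖S‖ * M ^ 2 := by
    intro b hb
    have h1 : g b ≤ ‖(inner ℂ (S (U b)) (U b) : ℂ)‖ :=
      le_trans (le_abs_self _) (Complex.abs_re_le_norm _)
    have h2 : ‖(inner ℂ (S (U b)) (U b) : ℂ)‖ ≤ ‖S (U b)‖ * ‖U b‖ := norm_inner_le_norm _ _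
    have h3 := S.le_opNorm (U b)
    have h4 : ‖S (U b)‖ * ‖U b‖ ≤ ‖S‖ * ‖U b‖ * ‖U b‖ :=
      mul_le_mul_of_nonneg_right h3 (norm_nonneg _)
    have h5 : ‖U b‖ * ‖U b‖ ≤ M * M :=
      mul_le_mul (hM b hb) (hM b hb) (norm_nonneg _) hM0
    nlinarith [mul_le_mul_of_nonneg_left h5 hS0]
  -- uniform bound on partial integrals
  set K : ℝ := (‖S‖ * M ^ 2 + 2 * ‖S‖ * M * IF) / (2 * θ) with hKdef
  have hpartial : ∀ b : ℝ, 0 ≤ b → (∫ z in (0:ℝ)..b, ‖U z‖ ^ 2) ≤ K := by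
    intro b hb
    have h := hmain 0 b le_rfl hb
    have h2 : 2 * θ * (∫ z in (0:ℝ)..b, ‖U z‖ ^ 2) ≤ ‖S‖ * M ^ 2 + 2 * ‖S‖ * M * IF := by
      have := hg0 0 le_rfl
      have := hgM b hb
      linarith
    rw [hKdef, le_div_iff₀ (by linarith : (0:ℝ) < 2 * θ)]
    linarith
  -- integrability of ‖U‖² on [0, ∞)
  have hIoiInt : IntegrableOn (fun z => ‖U z‖ ^ 2) (Ioi 0) := by
    refine integrableOn_Ioi_of_intervalIntegral_norm_bounded K 0
      (fun i => hUsqIoc i) Filter.tendsto_id ?_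
    filter_upwards [Filter.eventually_ge_atTop (0:ℝ)] with b hb
    have : (∫ x in (0:ℝ)..b, ‖‖U x‖ ^ 2‖) = ∫ x in (0:ℝ)..b, ‖U x‖ ^ 2 := by
      congr 1
      funext x
      rw [Real.norm_eq_abs, abs_of_nonneg (by positivity)]
    rw [this]
    exact hpartial b hb
  have hIciInt : IntegrableOn (fun z => ‖U z‖ ^ 2) (Ici 0) := by
    rwa [integrableOn_Ici_iff_integrableOn_Ioi]
  refine ⟨hIciInt, ?_⟩
  -- g tends to 0 at infinity
  have hgtend : Filter.Tendsto g Filter.atTop (nhds 0) := by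
    have hc : Continuous fun v : EuclideanSpace ℂ (Fin n) => (inner ℂ (S v) v : ℂ).re :=
      Complex.continuous_re.comp (Continuous.inner (S.continuous) continuous_id)
    have h0 := (hc.tendsto 0).comp hUlim
    have he : (inner ℂ (S (0 : EuclideanSpace ℂ (Fin n))) (0 : EuclideanSpace ℂ (Fin n)) : ℂ).re
        = 0 := by rw [map_zero, inner_zero_left]; simp
    rw [he] at h0
    simpa only [Function.comp_def] using h0
  -- interval integrals tend to the full integral
  have hItend : Filter.Tendsto (fun b => ∫ z in (0:ℝ)..b, ‖U z‖ ^ 2) Filter.atTop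
      (nhds (∫ z in Ioi (0:ℝ), ‖U z‖ ^ 2)) :=
    intervalIntegral_tendsto_integral_Ioi 0 hIoiInt Filter.tendsto_id
  have hIeq : (∫ w in Ici (0:ℝ), ‖U w‖ ^ 2) = ∫ w in Ioi (0:ℝ), ‖U w‖ ^ 2 :=
    integral_Ici_eq_integral_Ioi
  -- bound on the integral term
  have hintle : θ * (∫ w in Ici (0:ℝ), ‖U w‖ ^ 2) ≤ ‖S‖ * M * IF := by
    have hA : Filter.Tendsto (fun b => 2 * θ * ∫ z in (0:ℝ)..b, ‖U z‖ ^ 2) Filter.atTop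
        (nhds (2 * θ * ∫ z in Ioi (0:ℝ), ‖U z‖ ^ 2)) := hItend.const_mul (2 * θ)
    have hB : Filter.Tendsto (fun b => g b + 2 * ‖S‖ * M * IF) Filter.atTop
        (nhds (0 + 2 * ‖S‖ * M * IF)) := hgtend.add_const _
    have h1 : 2 * θ * (∫ z in Ioi (0:ℝ), ‖U z‖ ^ 2) ≤ 0 + 2 * ‖S‖ * M * IF := by
      refine le_of_tendsto_of_tendsto hA hB ?_
      filter_upwards [Filter.eventually_ge_atTop (0:ℝ)] with b hb
      have h2 := hmain 0 b le_rfl hb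
      have h3 := hg0 0 le_rfl
      show 2 * θ * (∫ z in (0:ℝ)..b, ‖U z‖ ^ 2) ≤ g b + 2 * ‖S‖ * M * IF
      linarith
    rw [hIeq]
    linarith
  -- pointwise bound
  have hsup : ∀ a : ℝ, 0 ≤ a → ‖U a‖ ^ 2 ≤ 2 * ‖S‖ * M * IF := by
    intro a ha
    have key : ‖U a‖ ^ 2 - 2 * ‖S‖ * M * IF ≤ (0:ℝ) := by
      refine ge_of_tendsto hgtend ?_
      filter_upwards [Filter.eventually_ge_atTop a] with b hb
      have h := hmain a b ha hb
      have hnn : 0 ≤ ∫ z in a..b, ‖U z‖ ^ 2 :=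
        intervalIntegral.integral_nonneg hb (fun x _ => by positivity)
      have := hgunit a ha
      nlinarith
    linarith
  -- bound on M
  have hMle : M ≤ 2 * ‖S‖ * IF := by
    have hKnn : (0:ℝ) ≤ 2 * ‖S‖ * M * IF := by positivity
    have hsqrt : M ≤ Real.sqrt (2 * ‖S‖ * M * IF) := by
      refine csSup_le hMne ?_
      rintro x ⟨a, ha, rfl⟩
      exact (Real.le_sqrt (norm_nonneg _) hKnn).2 (hsup a ha)
    have hMsq : M ^ 2 ≤ 2 * ‖S‖ * M * IF := by
      calc M ^ 2 ≤ Real.sqrt (2 * ‖S‖ * M * IF) ^ 2 := by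
            exact pow_le_pow_left₀ hM0 hsqrt 2
        _ = 2 * ‖S‖ * M * IF := Real.sq_sqrt hKnn
    rcases eq_or_lt_of_le hM0 with hM0' | hM0'
    · rw [← hM0']; positivity
    · nlinarith
  -- conclusion
  intro z hz
  have h1 := hsup z hz
  have h2 := hintle
  nlinarith [mul_le_mul_of_nonneg_left hMle (mul_nonneg hS0 hIF0),
    mul_nonneg (mul_nonneg hS0 hS0) (mul_nonneg hIF0 hIF0), hM0, hS0, hIF0]
end

section
/- Let n be a positive integer, Q an n×n complex matrix, and F : [0,∞) → ℂⁿ an integrable function. Let U : [0,∞) → ℂⁿ be bounded, continuously differentiable, and satisfy U'(z) = Q·U(z) + F(z) for all z ≥ 0. Suppose S is a Hermitian n×n complex matrix with ⟨Sv, v⟩ ≤ −|v|² for all v ∈ ℂⁿ (−S ≥ Id), and Re(SQ) := (SQ + (SQ)*)/2 satisfies ⟨Re(SQ)v, v⟩ ≥ θ|v|² for all v, for some θ > 0. Then there is a constant C depending only on the operator norm ‖S‖ such that sup_{z≥0} |U(z)|² + θ·∫₀^∞ |U(z)|² dz ≤ C (|U(0)|² + (∫₀^∞ |F(z)| dz)²).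 -/
open MeasureTheory Set

set_option maxHeartbeats 1000000

/-- Lemma 3.2, second case (negative symmetrizer): if `∂_z U = Q U + F` on `[0,∞)`
with `U` bounded, `S` Hermitian with `-S ≥ Id` and `Re (S Q) ≥ θ Id`, then
`sup |U|² + θ ∫ |U|² ≤ C (|U(0)|² + (∫ |F|)²)`, where `C` depends only on `‖S‖`. -/
theorem symmetrizer_energy_estimate_negative (r : ℝ) :
    ∃ C : ℝ, 0 < C ∧
      ∀ (n : ℕ), 0 < n →
        ∀ (Q S : EuclideanSpace ℂ (Fin n) →L[ℂ] EuclideanSpace ℂ (Fin n))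
          (θ : ℝ) (F U : ℝ → EuclideanSpace ℂ (Fin n)),
          ‖S‖ = r →
          0 < θ →
          IntegrableOn F (Ici 0) →
          (∃ M : ℝ, ∀ z : ℝ, 0 ≤ z → ‖U z‖ ≤ M) →
          (∀ z : ℝ, 0 ≤ z → HasDerivAt U (Q (U z) + F z) z) →
          IsSelfAdjoint S →
          (∀ v : EuclideanSpace ℂ (Fin n), (inner ℂ (S v) v : ℂ).re ≤ -‖v‖ ^ 2) →
          (∀ v : EuclideanSpace ℂ (Fin n),
            θ * ‖v‖ ^ 2 ≤
              (inner ℂ ((((1 : ℂ) / 2) •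
                ((S ∘L Q) + ContinuousLinearMap.adjoint (S ∘L Q))) v) v : ℂ).re) →
          IntegrableOn (fun z => ‖U z‖ ^ 2) (Ici 0) ∧
            ∀ z : ℝ, 0 ≤ z →
              ‖U z‖ ^ 2 + θ * ∫ w in Ici (0 : ℝ), ‖U w‖ ^ 2 ≤
                C * (‖U 0‖ ^ 2 + (∫ w in Ici (0 : ℝ), ‖F w‖) ^ 2) := by
  refine ⟨6 * r ^ 2 + 3 * |r| + 1, by positivity, ?_⟩
  intro n hn Q S θ F U hr hθ hF hMb hU hS hneg hpos
  obtain ⟨M, hM⟩ := hMb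
  -- `r ≥ 1`
  have hr1 : 1 ≤ r := by
    rw [← hr]
    set v : EuclideanSpace ℂ (Fin n) := EuclideanSpace.single ⟨0, hn⟩ (1 : ℂ) with hv
    have hvn : ‖v‖ = 1 := by simp [hv, EuclideanSpace.norm_single]
    have h1 := hneg v
    have h2 : -(inner ℂ (S v) v : ℂ).re ≤ ‖S‖ := by
      calc -(inner ℂ (S v) v : ℂ).re ≤ |(inner ℂ (S v) v : ℂ).re| := neg_le_abs _
        _ ≤ ‖(inner ℂ (S v) v : ℂ)‖ := by
            exact Complex.abs_re_le_norm _
        _ ≤ ‖S v‖ * ‖v‖ := norm_inner_le_norm _ _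
        _ ≤ ‖S‖ * ‖v‖ * ‖v‖ := by gcongr; exact S.le_opNorm v
        _ = ‖S‖ := by rw [hvn]; ring
    rw [hvn] at h1; simp only [one_pow] at h1; linarith
  have hr0 : 0 ≤ r := by linarith
  -- positivity of `Re ⟪S Q v, v⟫`
  have hSQ : ∀ v : EuclideanSpace ℂ (Fin n),
      θ * ‖v‖ ^ 2 ≤ (inner ℂ (S (Q v)) v : ℂ).re := by
    intro v
    have h := hpos v
    simp only [ContinuousLinearMap.smul_apply, ContinuousLinearMap.add_apply,
      ContinuousLinearMap.coe_comp', Function.comp_apply, inner_smul_left, inner_add_left,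
      ContinuousLinearMap.adjoint_inner_left] at h
    have e : (inner ℂ v (S (Q v)) : ℂ) = (starRingEnd ℂ) (inner ℂ (S (Q v)) v) :=
      (inner_conj_symm _ _).symm
    rw [e] at h
    have : ((starRingEnd ℂ) ((1 : ℂ) / 2) * ((inner ℂ (S (Q v)) v : ℂ) +
        (starRingEnd ℂ) (inner ℂ (S (Q v)) v : ℂ))).re = (inner ℂ (S (Q v)) v : ℂ).re := by
      simp [Complex.mul_re, Complex.add_re, Complex.add_im]
      rw [e, Complex.conj_re]
      ring
    linarith [h.trans_eq this]
  -- real parts can be flipped across a self-adjoint `S`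
  have hself : ∀ x w : EuclideanSpace ℂ (Fin n),
      (inner ℂ (S x) w : ℂ).re = (inner ℂ (S w) x : ℂ).re := by
    intro x w
    have e1 : (inner ℂ (S x) w : ℂ) = (starRingEnd ℂ) (inner ℂ w (S x) : ℂ) :=
      (inner_conj_symm _ _).symm
    have e2 : (inner ℂ (S w) x : ℂ) = inner ℂ w (S x) := by
      rw [← ContinuousLinearMap.adjoint_inner_right,
        ContinuousLinearMap.isSelfAdjoint_iff'.1 hS]
    rw [e1, e2, Complex.conj_re]
  have hUc : ContinuousOn U (Ici (0 : ℝ)) := fun z hz =>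
    ((hU z hz).continuousAt).continuousWithinAt
  set G := ∫ w in Ici (0 : ℝ), ‖F w‖ with hGdef
  have hG0 : 0 ≤ G :=
    setIntegral_nonneg measurableSet_Ici fun w _ => norm_nonneg _
  set A := sSup ((fun w => ‖U w‖) '' Ici (0 : ℝ)) with hAdef
  have hbdd : BddAbove ((fun w => ‖U w‖) '' Ici (0 : ℝ)) :=
    ⟨max M 0, by rintro x ⟨w, hw, rfl⟩; exact le_max_of_le_left (hM w hw)⟩
  have hAmem : ∀ w : ℝ, 0 ≤ w → ‖U w‖ ≤ A := fun w hw =>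
    le_csSup hbdd ⟨w, hw, rfl⟩
  have hA0 : 0 ≤ A := (norm_nonneg _).trans (hAmem 0 le_rfl)
  have hFG : ∀ z : ℝ, 0 ≤ z → (∫ t in (0 : ℝ)..z, ‖F t‖) ≤ G := by
    intro z hz
    rw [intervalIntegral.integral_of_le hz]
    exact setIntegral_mono_set hF.norm (ae_of_all _ fun t => norm_nonneg _)
      ((Ioc_subset_Icc_self.trans Icc_subset_Ici_self).eventuallyLE)
  -- the main energy inequality on finite intervals
  have hkey : ∀ z : ℝ, 0 ≤ z →
      ‖U z‖ ^ 2 + 2 * θ * (∫ t in (0 : ℝ)..z, ‖U t‖ ^ 2) ≤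
        r * ‖U 0‖ ^ 2 + 2 * r * A * G := by
    intro z hz
    set c : ℝ → ℝ := fun t => 2 * (inner ℂ (S (Q (U t))) (U t) : ℂ).re with hcdef
    set e : ℝ → ℝ := fun t => 2 * (inner ℂ (S (F t)) (U t) : ℂ).re with hedef
    have hUIcc : ContinuousOn U (Icc 0 z) := hUc.mono Icc_subset_Ici_self
    have hc_cont : ContinuousOn c (Icc 0 z) := by
      have hcv : Continuous fun v : EuclideanSpace ℂ (Fin n) =>
          (2 : ℝ) * (inner ℂ (S (Q v)) v : ℂ).re :=
        continuous_const.mul (Complex.continuous_re.comp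
          (Continuous.inner (S.continuous.comp Q.continuous) continuous_id))
      exact hcv.comp_continuousOn hUIcc
    have hcint : IntervalIntegrable c volume 0 z := by
      rw [intervalIntegrable_iff_integrableOn_Ioc_of_le hz]
      exact (hc_cont.integrableOn_Icc).mono_set Ioc_subset_Icc_self
    have hFIoc : IntegrableOn F (Ioc 0 z) :=
      hF.mono_set (Ioc_subset_Icc_self.trans Icc_subset_Ici_self)
    have hUm : AEStronglyMeasurable U (volume.restrict (Ioc 0 z)) :=
      (hUIcc.mono Ioc_subset_Icc_self).aestronglyMeasurable measurableSet_Ioc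
    have hebound : ∀ t : ℝ, 0 ≤ t → ‖e t‖ ≤ 2 * r * A * ‖F t‖ := by
      intro t ht
      have h1 : |(inner ℂ (S (F t)) (U t) : ℂ).re| ≤ ‖S‖ * ‖F t‖ * ‖U t‖ := by
        calc |(inner ℂ (S (F t)) (U t) : ℂ).re| ≤ ‖(inner ℂ (S (F t)) (U t) : ℂ)‖ := by
              exact Complex.abs_re_le_norm _
          _ ≤ ‖S (F t)‖ * ‖U t‖ := norm_inner_le_norm _ _
          _ ≤ ‖S‖ * ‖F t‖ * ‖U t‖ := by gcongr; exact S.le_opNorm _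
      have h2 : ‖U t‖ ≤ A := hAmem t ht
      have h3 : 0 ≤ ‖F t‖ := norm_nonneg _
      rw [hedef, Real.norm_eq_abs, abs_mul, abs_two]
      rw [hr] at h1
      nlinarith [abs_nonneg ((inner ℂ (S (F t)) (U t) : ℂ).re),
        mul_nonneg (mul_nonneg hr0 h3) (sub_nonneg.2 h2)]
    have heint : IntervalIntegrable e volume 0 z := by
      rw [intervalIntegrable_iff_integrableOn_Ioc_of_le hz]
      have hem : AEStronglyMeasurable e (volume.restrict (Ioc 0 z)) := by
        have hSF : AEStronglyMeasurable (fun t => S (F t)) (volume.restrict (Ioc 0 z)) :=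
          S.continuous.comp_aestronglyMeasurable hFIoc.aestronglyMeasurable
        exact (Complex.continuous_re.comp_aestronglyMeasurable
          (hSF.inner hUm)).const_mul 2
      refine Integrable.mono' ((hFIoc.norm).const_mul (2 * r * A)) hem ?_
      filter_upwards [ae_restrict_mem measurableSet_Ioc] with t ht
      exact hebound t ht.1.le
    -- FTC
    have hder : ∀ t ∈ uIcc (0 : ℝ) z,
        HasDerivAt (fun s => (inner ℂ (S (U s)) (U s) : ℂ).re) (c t + e t) t := by
      intro t ht
      rw [uIcc_of_le hz] at ht
      have h1 : HasDerivAt (fun s => S (U s)) (S (Q (U t) + F t)) t :=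
        ((S.restrictScalars ℝ).hasFDerivAt).comp_hasDerivAt t (hU t ht.1)
      have h2 := (Complex.reCLM.hasFDerivAt).comp_hasDerivAt t (h1.inner ℂ (hU t ht.1))
      convert h2 using 1
      show c t + e t = ((inner ℂ (S (U t)) (Q (U t) + F t) : ℂ) +
        (inner ℂ (S (Q (U t) + F t)) (U t) : ℂ)).re
      rw [Complex.add_re, hself (U t) (Q (U t) + F t), map_add, inner_add_left,
        Complex.add_re, hcdef, hedef]
      ring
      all_goals rfl
    have hFTCeq := intervalIntegral.integral_eq_sub_of_hasDerivAt hder (hcint.add heint)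
    rw [intervalIntegral.integral_add hcint heint] at hFTCeq
    -- bound ∫ c from below
    have hu2 : IntervalIntegrable (fun t => 2 * θ * ‖U t‖ ^ 2) volume 0 z := by
      rw [intervalIntegrable_iff_integrableOn_Ioc_of_le hz]
      exact ((((hUIcc.norm).pow 2).const_smul (2 * θ)).integrableOn_Icc).mono_set
        Ioc_subset_Icc_self
    have hcb : (∫ t in (0 : ℝ)..z, 2 * θ * ‖U t‖ ^ 2) ≤ ∫ t in (0 : ℝ)..z, c t :=
      intervalIntegral.integral_mono_on hz hu2 hcint fun t ht => by
        have := hSQ (U t); rw [hcdef]; dsimp only; linarith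
    have hcb2 : 2 * θ * (∫ t in (0 : ℝ)..z, ‖U t‖ ^ 2) =
        ∫ t in (0 : ℝ)..z, 2 * θ * ‖U t‖ ^ 2 :=
      (intervalIntegral.integral_const_mul _ _).symm
    -- bound |∫ e|
    have hFnormint : IntervalIntegrable (fun t => 2 * r * A * ‖F t‖) volume 0 z := by
      rw [intervalIntegrable_iff_integrableOn_Ioc_of_le hz]
      exact (hFIoc.norm).const_mul _
    have heb : |∫ t in (0 : ℝ)..z, e t| ≤ 2 * r * A * G := by
      calc |∫ t in (0 : ℝ)..z, e t| ≤ ∫ t in (0 : ℝ)..z, |e t| :=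
            intervalIntegral.abs_integral_le_integral_abs hz
        _ ≤ ∫ t in (0 : ℝ)..z, 2 * r * A * ‖F t‖ :=
            intervalIntegral.integral_mono_on hz heint.abs hFnormint fun t ht => by
              have := hebound t ht.1
              rwa [Real.norm_eq_abs] at this
        _ = 2 * r * A * ∫ t in (0 : ℝ)..z, ‖F t‖ :=
            intervalIntegral.integral_const_mul _ _
        _ ≤ 2 * r * A * G := by
            have : (0 : ℝ) ≤ 2 * r * A := by positivity
            exact mul_le_mul_of_nonneg_left (hFG z hz) this
    have hzb : ‖U z‖ ^ 2 ≤ -((inner ℂ (S (U z)) (U z) : ℂ).re) := by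
      have := hneg (U z); linarith
    have h0b : -((inner ℂ (S (U 0)) (U 0) : ℂ).re) ≤ r * ‖U 0‖ ^ 2 := by
      have h1 : -((inner ℂ (S (U 0)) (U 0) : ℂ).re) ≤ ‖S‖ * ‖U 0‖ * ‖U 0‖ := by
        calc -((inner ℂ (S (U 0)) (U 0) : ℂ).re) ≤ |(inner ℂ (S (U 0)) (U 0) : ℂ).re| :=
              neg_le_abs _
          _ ≤ ‖(inner ℂ (S (U 0)) (U 0) : ℂ)‖ := by
              exact Complex.abs_re_le_norm _
          _ ≤ ‖S (U 0)‖ * ‖U 0‖ := norm_inner_le_norm _ _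
          _ ≤ ‖S‖ * ‖U 0‖ * ‖U 0‖ := by gcongr; exact S.le_opNorm _
      rw [hr] at h1; nlinarith
    have hneg_e : -(∫ t in (0 : ℝ)..z, e t) ≤ 2 * r * A * G :=
      (neg_le_abs _).trans heb
    linarith [hFTCeq, hcb, hcb2, hzb, h0b, hneg_e]
  -- take the sup over `z` to control `A`
  set B := r * ‖U 0‖ ^ 2 + 2 * r * A * G with hBdef
  have hB0 : 0 ≤ B := by positivity
  have hAB : A ^ 2 ≤ B := by
    have hA_le : A ≤ Real.sqrt B := by
      apply Real.sSup_le _ (Real.sqrt_nonneg B)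
      rintro x ⟨w, hw, rfl⟩
      have h3 : 0 ≤ ∫ t in (0 : ℝ)..w, ‖U t‖ ^ 2 :=
        intervalIntegral.integral_nonneg hw fun t _ => sq_nonneg _
      have h1 : ‖U w‖ ^ 2 ≤ B := by nlinarith [hkey w hw]
      exact (Real.le_sqrt (norm_nonneg _) hB0).2 h1
    calc A ^ 2 ≤ Real.sqrt B ^ 2 := by gcongr
      _ = B := Real.sq_sqrt hB0
  set K := 2 * r * ‖U 0‖ ^ 2 + 4 * r ^ 2 * G ^ 2 with hKdef
  clear_value K
  have hBK : B ≤ K := by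
    rw [hBdef, hKdef]
    nlinarith [sq_nonneg (A - 2 * r * G), hAB, sq_nonneg (‖U 0‖)]
  have hkey2 : ∀ z : ℝ, 0 ≤ z →
      ‖U z‖ ^ 2 + 2 * θ * (∫ t in (0 : ℝ)..z, ‖U t‖ ^ 2) ≤ K := fun z hz =>
    (hkey z hz).trans hBK
  have hbd : ∀ z : ℝ, 0 ≤ z → (∫ t in (0 : ℝ)..z, ‖U t‖ ^ 2) ≤ K / (2 * θ) := by
    intro z hz
    rw [le_div_iff₀ (by positivity : (0 : ℝ) < 2 * θ)]
    linarith [hkey2 z hz, sq_nonneg (‖U z‖)]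
  -- integrability of `‖U‖²`
  have hg_cont : ContinuousOn (fun t => ‖U t‖ ^ 2) (Ici (0 : ℝ)) := (hUc.norm).pow 2
  have hIoi : IntegrableOn (fun t => ‖U t‖ ^ 2) (Ioi (0 : ℝ)) := by
    apply integrableOn_Ioi_of_intervalIntegral_norm_bounded (K / (2 * θ)) 0
      (b := fun i : ℕ => (i : ℝ)) (l := Filter.atTop) ?_ tendsto_natCast_atTop_atTop ?_
    · intro i
      exact ((hg_cont.mono Icc_subset_Ici_self).integrableOn_Icc).mono_set
        Ioc_subset_Icc_self
    · filter_upwards with i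
      have heq : (∫ x in (0 : ℝ)..(i : ℝ), ‖‖U x‖ ^ 2‖) =
          ∫ x in (0 : ℝ)..(i : ℝ), ‖U x‖ ^ 2 := by
        apply intervalIntegral.integral_congr
        intro x _
        dsimp only
        rw [Real.norm_eq_abs, abs_of_nonneg (sq_nonneg _)]
      rw [heq]
      exact hbd _ (Nat.cast_nonneg i)
  have hInt : IntegrableOn (fun z => ‖U z‖ ^ 2) (Ici (0 : ℝ)) :=
    (integrableOn_Ici_iff_integrableOn_Ioi enorm_ne_top).2 hIoi
  refine ⟨hInt, ?_⟩
  have hlim := intervalIntegral_tendsto_integral_Ioi 0 hIoi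
    (tendsto_natCast_atTop_atTop (R := ℝ))
  have hIbound : (∫ w in Ioi (0 : ℝ), ‖U w‖ ^ 2) ≤ K / (2 * θ) :=
    le_of_tendsto hlim (Filter.Eventually.of_forall fun i => hbd _ (Nat.cast_nonneg i))
  have h4 : θ * (∫ w in Ici (0 : ℝ), ‖U w‖ ^ 2) ≤ K / 2 := by
    rw [integral_Ici_eq_integral_Ioi]
    calc θ * (∫ w in Ioi (0 : ℝ), ‖U w‖ ^ 2) ≤ θ * (K / (2 * θ)) :=
          mul_le_mul_of_nonneg_left hIbound hθ.le
      _ = K / 2 := by field_simp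
  intro z hz
  have h3 : 0 ≤ ∫ t in (0 : ℝ)..z, ‖U t‖ ^ 2 :=
    intervalIntegral.integral_nonneg hz fun t _ => sq_nonneg _
  have h1 : ‖U z‖ ^ 2 ≤ K := by nlinarith [hkey2 z hz]
  rw [abs_of_nonneg hr0]
  rw [hKdef] at h1 h4
  nlinarith [mul_nonneg (mul_nonneg hr0 hr0) (sq_nonneg G),
    mul_nonneg hr0 (sq_nonneg (‖U 0‖)), sq_nonneg (‖U 0‖), sq_nonneg G, h4, h1]
end

section
/- Let A₁ = [[0,1],[1,0]] and A₂ = [[0,0],[0,1]] as 2×2 real matrices, and define λ : ℝ² → ℝ by λ(ξ₁,ξ₂) = (ξ₂ − √(ξ₂² + 4ξ₁²))/2. Then: (i) A₁ and A₂ are symmetric and A₁A₂ ≠ A₂A₁; (ii) for every ξ = (ξ₁,ξ₂) ∈ ℝ², λ(ξ) is an eigenvalue of ξ₁A₁ + ξ₂A₂, i.e. det(ξ₁A₁ + ξ₂A₂ − λ(ξ)·Id) = 0; (iii) λ(0,ξ₂) = 0 for all ξ₂ ≥ 0; and (iv) λ is differentiable at (0,1) with total (Fréchet) derivative equal to zero.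 -/
open Matrix

/-- The counterexample matrices of Counterexample A.1. -/
def counterA1 : Matrix (Fin 2) (Fin 2) ℝ := !![0, 1; 1, 0]

def counterA2 : Matrix (Fin 2) (Fin 2) ℝ := !![0, 0; 0, 1]

/-- The eigenvalue `λ(ξ) = (ξ₂ - √(ξ₂² + 4ξ₁²))/2` of `ξ₁A₁ + ξ₂A₂`. -/
noncomputable def counterLam (ξ : ℝ × ℝ) : ℝ :=
  (ξ.2 - Real.sqrt (ξ.2 ^ 2 + 4 * ξ.1 ^ 2)) / 2

/-- Counterexample A.1 (Zumbrun): the symmetric, noncommuting matrices `A₁, A₂`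
admit an eigenvalue `λ(ξ)` of `ξ₁A₁ + ξ₂A₂` which vanishes on the ray `ξ₁ = 0, ξ₂ ≥ 0`
and has vanishing total derivative at `ξ = (0,1)`, violating hypothesis (H4'). -/
theorem counterexample_H4' :
    counterA1.IsSymm ∧ counterA2.IsSymm ∧
      counterA1 * counterA2 ≠ counterA2 * counterA1 ∧
      (∀ ξ : ℝ × ℝ,
        (ξ.1 • counterA1 + ξ.2 • counterA2 -
          counterLam ξ • (1 : Matrix (Fin 2) (Fin 2) ℝ)).det = 0) ∧
      (∀ ξ₂ : ℝ, 0 ≤ ξ₂ → counterLam (0, ξ₂) = 0) ∧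
      HasFDerivAt counterLam (0 : ℝ × ℝ →L[ℝ] ℝ) (0, 1) := by
  refine ⟨?_, ?_, ?_, ?_, ?_, ?_⟩
  · ext i j; fin_cases i <;> fin_cases j <;> simp [counterA1, Matrix.IsSymm]
  · ext i j; fin_cases i <;> fin_cases j <;> simp [counterA2, Matrix.IsSymm]
  · intro h
    have := congrFun (congrFun h 0) 1
    simp [counterA1, counterA2, Matrix.mul_apply, Fin.sum_univ_two] at this
  · intro ξ
    have hs : Real.sqrt (ξ.2 ^ 2 + 4 * ξ.1 ^ 2) ^ 2 = ξ.2 ^ 2 + 4 * ξ.1 ^ 2 :=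
      Real.sq_sqrt (by positivity)
    set s := Real.sqrt (ξ.2 ^ 2 + 4 * ξ.1 ^ 2)
    simp only [counterA1, counterA2, counterLam]
    rw [show (ξ.1 • !![(0:ℝ), 1; 1, 0] + ξ.2 • !![(0:ℝ), 0; 0, 1] -
        ((ξ.2 - s) / 2) • (1 : Matrix (Fin 2) (Fin 2) ℝ)) =
        !![-(ξ.2 - s)/2, ξ.1; ξ.1, ξ.2 - (ξ.2 - s)/2] by
      ext i j; fin_cases i <;> fin_cases j <;>
        simp [Matrix.one_apply] <;> ring]
    rw [Matrix.det_fin_two_of]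
    nlinarith [hs]
  · intro ξ₂ h
    simp [counterLam, Real.sqrt_sq h]
  · have hg : HasFDerivAt (fun ξ : ℝ × ℝ => ξ.2 * ξ.2 + 4 * (ξ.1 * ξ.1))
        ((((0:ℝ), (1:ℝ)).2 • ContinuousLinearMap.snd ℝ ℝ ℝ +
            ((0:ℝ), (1:ℝ)).2 • ContinuousLinearMap.snd ℝ ℝ ℝ) +
          (4:ℝ) • (((0:ℝ), (1:ℝ)).1 • ContinuousLinearMap.fst ℝ ℝ ℝ +
            ((0:ℝ), (1:ℝ)).1 • ContinuousLinearMap.fst ℝ ℝ ℝ)) ((0:ℝ), (1:ℝ)) :=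
      ((hasFDerivAt_snd.mul hasFDerivAt_snd).add
        ((hasFDerivAt_fst.mul hasFDerivAt_fst).const_mul 4))
    have hsq : HasDerivAt Real.sqrt (1 / 2)
        (((0:ℝ), (1:ℝ)).2 * ((0:ℝ), (1:ℝ)).2 + 4 * (((0:ℝ), (1:ℝ)).1 * ((0:ℝ), (1:ℝ)).1)) := by
      have h := Real.hasDerivAt_sqrt (one_ne_zero (α := ℝ))
      rw [Real.sqrt_one] at h
      norm_num at h ⊢
      exact h
    have hc := hsq.comp_hasFDerivAt ((0:ℝ), (1:ℝ)) hg
    have key := ((hasFDerivAt_snd (𝕜 := ℝ) (E := ℝ) (F := ℝ)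
      (p := ((0:ℝ), (1:ℝ)))).sub hc).const_mul (1/2 : ℝ)
    have heq : counterLam = fun x : ℝ × ℝ =>
        (1/2 : ℝ) * (x.2 - (Real.sqrt ∘ fun ξ : ℝ × ℝ => ξ.2 * ξ.2 + 4 * (ξ.1 * ξ.1)) x) := by
      funext x
      simp only [counterLam, Function.comp]
      rw [show x.2 * x.2 + 4 * (x.1 * x.1) = x.2 ^ 2 + 4 * x.1 ^ 2 by ring]
      ring
    rw [heq]
    exact key.congr_fderiv (by ext x <;> simp <;> norm_num)
end

section
/- Let ρ > 0, θ > 0, and p ∈ [1, ∞) be real. Then there exists a constant C depending only on θ and p (not on ρ) such that for every f ∈ L¹(ℝ) ∩ L^∞(ℝ), the function u(x) := ∫_ℝ e^{−ρ|x−y|}(ρ + e^{−θ|y|}) |f(y)| dy satisfies ‖u‖_{L^p(ℝ)} ≤ C ρ^{−1/p} (ρ‖f‖_{L¹(ℝ)} + ‖f‖_{L^∞(ℝ)}). -/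
open MeasureTheory Set
open scoped ENNReal NNReal

lemma my_integrable_exp_neg_mul_abs {b : ℝ} (hb : 0 < b) :
    Integrable (fun x : ℝ => Real.exp (-b * |x|)) := by
  have h1 : IntegrableOn (fun x : ℝ => Real.exp (-b * |x|)) (Ioi 0) :=
    (exp_neg_integrableOn_Ioi 0 hb).congr_fun
      (fun x hx => by rw [abs_of_pos (mem_Ioi.mp hx)]) measurableSet_Ioi
  have h2 : IntegrableOn (fun x : ℝ => Real.exp (-b * |x|)) (Iic 0) := by
    rw [← Measure.map_neg_eq_self (volume : Measure ℝ)]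
    have m : MeasurableEmbedding fun x : ℝ => -x := (Homeomorph.neg ℝ).measurableEmbedding
    rw [m.integrableOn_map_iff]
    simp_rw [Function.comp_def, abs_neg, neg_preimage, neg_Iic, neg_zero]
    exact Iff.mpr integrableOn_Ici_iff_integrableOn_Ioi h1
  have := h2.union h1
  rwa [Iic_union_Ioi, integrableOn_univ] at this

lemma my_integral_exp_neg_mul_abs {b : ℝ} (hb : 0 < b) :
    (∫ x : ℝ, Real.exp (-b * |x|)) = 2 / b := by
  have h : (∫ x : ℝ, Real.exp (-b * |x|)) = 2 * ∫ x in Ioi (0:ℝ), Real.exp (-b * x) :=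
    integral_comp_abs (f := fun x => Real.exp (-b * x))
  rw [h]
  have h2 : (∫ x in Ioi (0:ℝ), Real.exp (-b * x)) = b⁻¹ • ∫ x in Ioi (b * 0), Real.exp (-x) := by
    simpa [neg_mul] using integral_comp_mul_left_Ioi (fun t => Real.exp (-t)) 0 hb
  rw [h2, mul_zero, integral_exp_neg_Ioi_zero]
  simp [smul_eq_mul]
  ring

/-- Green-kernel integral-operator estimate (estimate (3.51) of the paper): for the
kernel `e^{-ρ|x-y|}(ρ + e^{-θ|y|})` one has
`‖u‖_{L^p} ≤ C ρ^{-1/p} (ρ ‖f‖_{L¹} + ‖f‖_{L^∞})` with `C = C(θ, p)` independent of `ρ`. -/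
theorem green_kernel_Lp_bound (θ p : ℝ) (hθ : 0 < θ) (hp : 1 ≤ p) :
    ∃ C : ℝ, 0 < C ∧
      ∀ ρ : ℝ, 0 < ρ →
        ∀ f : ℝ → ℂ, Integrable f → MemLp f ⊤ →
          ∀ u : ℝ → ℝ,
            (u = fun x => ∫ y : ℝ,
              Real.exp (-ρ * |x - y|) * (ρ + Real.exp (-θ * |y|)) * ‖f y‖) →
            eLpNorm u (ENNReal.ofReal p) volume ≤
              ENNReal.ofReal (C * ρ ^ (-(1 : ℝ) / p) *
                (ρ * (∫ y : ℝ, ‖f y‖) + (eLpNorm f ⊤ volume).toReal)) := by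
  refine ⟨2 * max 1 (2 / θ), mul_pos two_pos (lt_of_lt_of_le one_pos (le_max_left _ _)), ?_⟩
  intro ρ hρ f hf hftop u hu
  have hp0 : (0:ℝ) < p := lt_of_lt_of_le one_pos hp
  -- measurable representative
  obtain ⟨g, hgm, hfg⟩ := hf.aestronglyMeasurable
  set G : ℝ → ℝ := fun y => ‖g y‖ with hGdef
  have hGmeas : Measurable G := hgm.norm.measurable
  have hGnn : ∀ y, 0 ≤ G y := fun y => norm_nonneg _
  have hGint : Integrable G :=
    hf.norm.congr (hfg.mono fun y h => by show ‖f y‖ = ‖g y‖; rw [h])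
  set I1 : ℝ := ∫ y : ℝ, ‖f y‖ with hI1def
  have hI1nn : 0 ≤ I1 := integral_nonneg fun y => norm_nonneg _
  have hGI1 : (∫ y : ℝ, G y) = I1 :=
    integral_congr_ae (hfg.mono fun y h => by show ‖g y‖ = ‖f y‖; rw [h])
  set Iinf : ℝ := (eLpNorm f ⊤ volume).toReal with hIinfdef
  have hIinfnn : 0 ≤ Iinf := ENNReal.toReal_nonneg
  have hfbd : ∀ᵐ y : ℝ, ‖f y‖ ≤ Iinf := by
    have h1 : ∀ᵐ y : ℝ, (‖f y‖₊ : ℝ≥0∞) ≤ eLpNormEssSup f volume := ae_le_eLpNormEssSup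
    have hne : eLpNormEssSup f volume ≠ ⊤ := by
      rw [← eLpNorm_exponent_top]; exact hftop.2.ne
    filter_upwards [h1] with y hy
    have h2 := ENNReal.toReal_mono hne hy
    simpa [hIinfdef, eLpNorm_exponent_top] using h2
  have hGbd : ∀ᵐ y : ℝ, G y ≤ Iinf := by
    filter_upwards [hfbd, hfg] with y h1 h2
    show ‖g y‖ ≤ Iinf
    rw [← h2]; exact h1
  -- the weight W
  have hexpθ_meas : Measurable fun y : ℝ => Real.exp (-θ * |y|) :=
    (Real.continuous_exp.comp (continuous_const.mul continuous_abs)).measurable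
  set W : ℝ → ℝ := fun y => (ρ + Real.exp (-θ * |y|)) * G y with hWdef
  have hWmeas : Measurable W := (measurable_const.add hexpθ_meas).mul hGmeas
  have hWnn : ∀ y, 0 ≤ W y := fun y =>
    mul_nonneg (add_nonneg hρ.le (Real.exp_pos _).le) (hGnn y)
  have hexpθ_int : Integrable (fun y : ℝ => Real.exp (-θ * |y|)) :=
    my_integrable_exp_neg_mul_abs hθ
  have hexp_le_one : ∀ z : ℝ, z ≤ 0 → Real.exp z ≤ 1 := fun z hz => by
    calc Real.exp z ≤ Real.exp 0 := Real.exp_le_exp.mpr hz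
    _ = 1 := Real.exp_zero
  have hWint : Integrable W := by
    have h1 : Integrable (fun y => ρ * G y) := hGint.const_mul ρ
    have h2 : Integrable (fun y => Real.exp (-θ * |y|) * G y) := by
      refine Integrable.mono hGint (hexpθ_meas.mul hGmeas).aestronglyMeasurable ?_
      filter_upwards with y
      rw [Real.norm_eq_abs, Real.norm_eq_abs,
        abs_of_nonneg (mul_nonneg (Real.exp_pos _).le (hGnn y)), abs_of_nonneg (hGnn y)]
      exact mul_le_of_le_one_left (hGnn y) (hexp_le_one _ (by simp only [neg_mul]; exact neg_nonpos.mpr (by positivity)))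
    have heq : W = fun y => ρ * G y + Real.exp (-θ * |y|) * G y := by
      funext y; show (ρ + Real.exp (-θ * |y|)) * G y = _; ring
    rw [heq]; exact h1.add h2
  set M : ℝ := ρ * I1 + 2 / θ * Iinf with hMdef
  have hMnn : 0 ≤ M :=
    add_nonneg (mul_nonneg hρ.le hI1nn) (mul_nonneg (div_nonneg two_pos.le hθ.le) hIinfnn)
  have hWle : (∫ y : ℝ, W y) ≤ M := by
    have hrhs : Integrable (fun y : ℝ => ρ * G y + Iinf * Real.exp (-θ * |y|)) :=
      (hGint.const_mul ρ).add (hexpθ_int.const_mul Iinf)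
    have hle : (∫ y : ℝ, W y) ≤ ∫ y : ℝ, (ρ * G y + Iinf * Real.exp (-θ * |y|)) := by
      refine integral_mono_ae hWint hrhs ?_
      filter_upwards [hGbd] with y hy
      show (ρ + Real.exp (-θ * |y|)) * G y ≤ _
      nlinarith [Real.exp_pos (-θ * |y|), hGnn y, hρ.le]
    rw [integral_add (hGint.const_mul ρ) (hexpθ_int.const_mul Iinf),
      integral_const_mul, integral_const_mul, hGI1, my_integral_exp_neg_mul_abs hθ] at hle
    rw [hMdef]; nlinarith [hle]
  -- rewrite u
  set U : ℝ → ℝ := fun x => ∫ y : ℝ, Real.exp (-ρ * |x - y|) * W y with hUdef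
  have hKint : ∀ x : ℝ, Integrable (fun y => Real.exp (-ρ * |x - y|) * W y) := by
    intro x
    have hm : Measurable fun y : ℝ => Real.exp (-ρ * |x - y|) :=
      (Real.continuous_exp.comp
        (continuous_const.mul (continuous_const.sub continuous_id).abs)).measurable
    refine Integrable.mono hWint (hm.mul hWmeas).aestronglyMeasurable ?_
    filter_upwards with y
    rw [Real.norm_eq_abs, Real.norm_eq_abs,
      abs_of_nonneg (mul_nonneg (Real.exp_pos _).le (hWnn y)), abs_of_nonneg (hWnn y)]
    exact mul_le_of_le_one_left (hWnn y) (hexp_le_one _ (by simp only [neg_mul]; exact neg_nonpos.mpr (by positivity)))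
  have huU : u = U := by
    rw [hu]; funext x
    refine integral_congr_ae ?_
    filter_upwards [hfg] with y hy
    show Real.exp (-ρ * |x - y|) * (ρ + Real.exp (-θ * |y|)) * ‖f y‖
      = Real.exp (-ρ * |x - y|) * ((ρ + Real.exp (-θ * |y|)) * ‖g y‖)
    rw [hy, mul_assoc]
  have hUnn : ∀ x, 0 ≤ U x := fun x =>
    integral_nonneg fun y => mul_nonneg (Real.exp_pos _).le (hWnn y)
  have hUle : ∀ x, U x ≤ M := by
    intro x
    have h1 : U x ≤ ∫ y : ℝ, W y := by
      refine integral_mono (hKint x) hWint fun y => ?_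
      exact mul_le_of_le_one_left (hWnn y) (hexp_le_one _ (by simp only [neg_mul]; exact neg_nonpos.mpr (by positivity)))
    linarith
  -- L¹-type lintegral bound
  have hkernel_meas : Measurable fun z : ℝ × ℝ =>
      ENNReal.ofReal (Real.exp (-ρ * |z.1 - z.2|) * W z.2) := by
    refine Measurable.ennreal_ofReal ?_
    exact ((Real.continuous_exp.comp
      (continuous_const.mul (continuous_fst.sub continuous_snd).abs)).measurable).mul
      (hWmeas.comp measurable_snd)
  have hL : (∫⁻ x, ENNReal.ofReal (U x)) ≤ ENNReal.ofReal (2 / ρ) * ENNReal.ofReal M := by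
    have e1 : ∀ x, ENNReal.ofReal (U x)
        = ∫⁻ y, ENNReal.ofReal (Real.exp (-ρ * |x - y|) * W y) := fun x =>
      ofReal_integral_eq_lintegral_ofReal (hKint x)
        (Filter.Eventually.of_forall fun y => mul_nonneg (Real.exp_pos _).le (hWnn y))
    calc (∫⁻ x, ENNReal.ofReal (U x))
        = ∫⁻ x, ∫⁻ y, ENNReal.ofReal (Real.exp (-ρ * |x - y|) * W y) := by
          exact lintegral_congr e1
      _ = ∫⁻ y, ∫⁻ x, ENNReal.ofReal (Real.exp (-ρ * |x - y|) * W y) :=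
          lintegral_lintegral_swap hkernel_meas.aemeasurable
      _ = ∫⁻ y, ENNReal.ofReal (2 / ρ) * ENNReal.ofReal (W y) := by
          refine lintegral_congr fun y => ?_
          have h2 : ∀ x, ENNReal.ofReal (Real.exp (-ρ * |x - y|) * W y)
              = ENNReal.ofReal (Real.exp (-ρ * |x - y|)) * ENNReal.ofReal (W y) := fun x =>
            ENNReal.ofReal_mul (Real.exp_pos _).le
          simp_rw [h2]
          rw [lintegral_mul_const' (ENNReal.ofReal (W y)) _ ENNReal.ofReal_ne_top]
          have hint : Integrable (fun x : ℝ => Real.exp (-ρ * |x - y|)) :=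
            (my_integrable_exp_neg_mul_abs hρ).comp_sub_right y
          have h3 : (∫⁻ x : ℝ, ENNReal.ofReal (Real.exp (-ρ * |x - y|)))
              = ENNReal.ofReal (2 / ρ) := by
            rw [← ofReal_integral_eq_lintegral_ofReal hint
              (Filter.Eventually.of_forall fun x => (Real.exp_pos _).le)]
            congr 1
            have h4 : (∫ x : ℝ, Real.exp (-ρ * |x - y|))
                = ∫ x : ℝ, Real.exp (-ρ * |x|) :=
              integral_sub_right_eq_self (fun t => Real.exp (-ρ * |t|)) y
            rw [h4, my_integral_exp_neg_mul_abs hρ]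
          rw [h3]
      _ = ENNReal.ofReal (2 / ρ) * ∫⁻ y, ENNReal.ofReal (W y) :=
          lintegral_const_mul' _ _ ENNReal.ofReal_ne_top
      _ ≤ ENNReal.ofReal (2 / ρ) * ENNReal.ofReal M := by
          refine mul_le_mul_right ?_ _
          rw [← ofReal_integral_eq_lintegral_ofReal hWint
            (Filter.Eventually.of_forall hWnn)]
          exact ENNReal.ofReal_le_ofReal hWle
  -- eLpNorm computation
  have hq0 : ENNReal.ofReal p ≠ 0 := by
    simp only [ne_eq, ENNReal.ofReal_eq_zero, not_le]; linarith
  rw [huU, eLpNorm_eq_lintegral_rpow_enorm_toReal hq0 ENNReal.ofReal_ne_top,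
    ENNReal.toReal_ofReal hp0.le]
  have henorm : ∀ x, (‖U x‖₊ : ℝ≥0∞) = ENNReal.ofReal (U x) := fun x => by
    rw [← enorm_eq_nnnorm, ← ofReal_norm, Real.norm_eq_abs, abs_of_nonneg (hUnn x)]
  have hMpow : ENNReal.ofReal M ^ (p - 1) * ENNReal.ofReal M = ENNReal.ofReal M ^ p := by
    conv_rhs => rw [show p = (p - 1) + 1 by ring]
    rw [ENNReal.rpow_add_of_nonneg _ _ (by linarith) zero_le_one, ENNReal.rpow_one]
  have key : (∫⁻ x, (‖U x‖₊ : ℝ≥0∞) ^ p)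
      ≤ ENNReal.ofReal (2 / ρ) * ENNReal.ofReal M ^ p := by
    calc (∫⁻ x, (‖U x‖₊ : ℝ≥0∞) ^ p)
        ≤ ∫⁻ x, ENNReal.ofReal M ^ (p - 1) * ENNReal.ofReal (U x) := by
          refine lintegral_mono fun x => ?_
          rw [henorm x]
          conv_lhs => rw [show p = (p - 1) + 1 by ring,
            ENNReal.rpow_add_of_nonneg _ _ (by linarith) zero_le_one, ENNReal.rpow_one]
          exact mul_le_mul_left
            (ENNReal.rpow_le_rpow (ENNReal.ofReal_le_ofReal (hUle x)) (by linarith)) _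
      _ = ENNReal.ofReal M ^ (p - 1) * ∫⁻ x, ENNReal.ofReal (U x) :=
          lintegral_const_mul' _ _
            (ENNReal.rpow_ne_top_of_nonneg (by linarith) ENNReal.ofReal_ne_top)
      _ ≤ ENNReal.ofReal M ^ (p - 1) * (ENNReal.ofReal (2 / ρ) * ENNReal.ofReal M) :=
          mul_le_mul_right hL _
      _ = ENNReal.ofReal (2 / ρ) * ENNReal.ofReal M ^ p := by
          rw [← mul_assoc, mul_comm (ENNReal.ofReal M ^ (p - 1)), mul_assoc, hMpow]
  have h1p : (0:ℝ) ≤ 1 / p := div_nonneg zero_le_one hp0.le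
  have h2ρ : (0:ℝ) ≤ 2 / ρ := div_nonneg two_pos.le hρ.le
  have hfinal : (∫⁻ x, (‖U x‖₊ : ℝ≥0∞) ^ p) ^ (1 / p)
      ≤ (ENNReal.ofReal (2 / ρ) * ENNReal.ofReal M ^ p) ^ (1 / p) :=
    ENNReal.rpow_le_rpow key h1p
  refine le_trans hfinal ?_
  rw [ENNReal.mul_rpow_of_nonneg _ _ h1p, ← ENNReal.rpow_mul,
    mul_one_div_cancel hp0.ne', ENNReal.rpow_one,
    ENNReal.ofReal_rpow_of_nonneg h2ρ h1p,
    ← ENNReal.ofReal_mul (Real.rpow_nonneg h2ρ _)]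
  apply ENNReal.ofReal_le_ofReal
  -- real arithmetic
  have hb : (0:ℝ) < ρ ^ ((1:ℝ) / p) := Real.rpow_pos_of_pos hρ _
  have h2p : (2:ℝ) ^ ((1:ℝ) / p) ≤ 2 := by
    have h := Real.rpow_le_rpow_of_exponent_le (x := 2) one_le_two
      (y := (1:ℝ)/p) (z := 1) (by rw [div_le_one hp0]; exact hp)
    rwa [Real.rpow_one] at h
  have hrneg : ρ ^ (-(1:ℝ) / p) = (ρ ^ ((1:ℝ) / p))⁻¹ := by
    rw [neg_div, Real.rpow_neg hρ.le]
  have hdiv : ((2:ℝ) / ρ) ^ ((1:ℝ) / p)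
      = (2:ℝ) ^ ((1:ℝ) / p) * (ρ ^ ((1:ℝ) / p))⁻¹ := by
    rw [Real.div_rpow (by norm_num) hρ.le, div_eq_mul_inv]
  have hmax1 : (1:ℝ) ≤ max 1 (2 / θ) := le_max_left _ _
  have hmax2 : (2:ℝ) / θ ≤ max 1 (2 / θ) := le_max_right _ _
  have hMle : M ≤ max 1 (2 / θ) * (ρ * I1 + Iinf) := by
    rw [hMdef]
    nlinarith [mul_nonneg hρ.le hI1nn]
  rw [hdiv, hrneg]
  have hNnn : (0:ℝ) ≤ ρ * I1 + Iinf := add_nonneg (mul_nonneg hρ.le hI1nn) hIinfnn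
  calc (2:ℝ) ^ ((1:ℝ) / p) * (ρ ^ ((1:ℝ) / p))⁻¹ * M
      ≤ 2 * (ρ ^ ((1:ℝ) / p))⁻¹ * (max 1 (2 / θ) * (ρ * I1 + Iinf)) := by
        have h1 : (0:ℝ) ≤ (ρ ^ ((1:ℝ) / p))⁻¹ := inv_nonneg.mpr hb.le
        have hk : (2:ℝ) ^ ((1:ℝ) / p) * M ≤ 2 * (max 1 (2 / θ) * (ρ * I1 + Iinf)) :=
          mul_le_mul h2p hMle hMnn (by norm_num)
        have hk2 := mul_le_mul_of_nonneg_left hk h1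
        nlinarith [hk2]
    _ = 2 * max 1 (2 / θ) * (ρ ^ ((1:ℝ) / p))⁻¹ * (ρ * I1 + Iinf) := by ring
end
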